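/- arXiv:2312.02028 — 6 statements merged into one kernel-verified Lean document; each statement's English description precedes it below -/
import Mathlib

section
/- Let n, r, d, m be natural numbers with 2 ≤ d and d+1 ≤ m ≤ n−1. Suppose H_1, …, H_r are proper subsets of {1,…,n} that are pairwise distinct and satisfy |H_{j1} ∩ H_{j2}| ≤ d−2 for all 1 ≤ j1 < j2 ≤ r. Then the number of m-element subsets S of {1,…,n} such that S ⊆ H_j for some j is at most C(n−1, m). -/
/-!
Fix `a ∈ U`. An `m`-set lying in a block and avoiding `a` is already an `m`-subset of `U \ {a}`.
If `S ∋ a` lies in the block `H i`, replace `a` by a point of `U` outside `H i`. Since two blocks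
meet in fewer than `m - 2` points, an `(m - 2)`-set lies in at most one block, so the modified set
determines its block, and with it the replaced point. It also lies in no block, so it is not one of
the sets avoiding `a`. This gives an injection into the `m`-subsets of `U \ {a}`.
-/

open Finset

section

variable {α ι : Type*} [DecidableEq α] {H : ι → Finset α} {m : ℕ}

theorem index_eq_of_subset_of_subset (hH : ∀ i j, i ≠ j → #(H i ∩ H j) + 2 < m)
    {A : Finset α} (hA : m ≤ #A + 2) {i j : ι} (hi : A ⊆ H i) (hj : A ⊆ H j) : i = j := by
  by_contra hij
  have := card_le_card (subset_inter hi hj)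
  have := hH i j hij
  omega

theorem eq_of_insert_erase_eq (hH : ∀ i j, i ≠ j → #(H i ∩ H j) + 2 < m)
    {S T : Finset α} {a x y : α} {i j : ι} (hS : #S = m) (haS : a ∈ S) (haT : a ∈ T)
    (hSi : S ⊆ H i) (hTj : T ⊆ H j) (hxi : x ∉ H i) (hyj : y ∉ H j)
    (heq : insert x (S.erase a) = insert y (T.erase a)) : S = T := by
  have hsub : (S.erase a).erase y ⊆ T.erase a := by
    intro z hz
    have hzR : z ∈ insert y (T.erase a) := heq ▸ mem_insert_of_mem (mem_of_mem_erase hz)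
    exact (mem_insert.1 hzR).resolve_left (ne_of_mem_erase hz)
  have hij : i = j := by
    refine index_eq_of_subset_of_subset hH (A := (S.erase a).erase y) ?_
      ((erase_subset _ _).trans ((erase_subset _ _).trans hSi))
      (hsub.trans ((erase_subset _ _).trans hTj))
    have := pred_card_le_card_erase (s := S.erase a) (a := y)
    rw [card_erase_of_mem haS] at this
    omega
  subst hij
  have hxy : x = y := by
    have hxR : x ∈ insert y (T.erase a) := heq ▸ mem_insert_self _ _
    exact (mem_insert.1 hxR).resolve_right fun hx => hxi (hTj (mem_of_mem_erase hx))
  subst hxy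
  have hnotS : x ∉ S.erase a := fun hx => hxi (hSi (mem_of_mem_erase hx))
  have hnotT : x ∉ T.erase a := fun hx => hyj (hTj (mem_of_mem_erase hx))
  refine erase_injOn' a haS haT ?_
  simpa only [erase_insert hnotS, erase_insert hnotT] using congrArg (·.erase x) heq

theorem insert_erase_ne_of_subset (hH : ∀ i j, i ≠ j → #(H i ∩ H j) + 2 < m)
    {S T : Finset α} {a x : α} {i k : ι} (hS : #S = m) (haS : a ∈ S)
    (hSi : S ⊆ H i) (hxi : x ∉ H i) (hTk : T ⊆ H k) : insert x (S.erase a) ≠ T := by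
  rintro rfl
  have hik : i = k := by
    refine index_eq_of_subset_of_subset hH (A := S.erase a) ?_ ((erase_subset _ _).trans hSi)
      ((subset_insert _ _).trans hTk)
    rw [card_erase_of_mem haS]
    omega
  exact hxi (hik ▸ hTk (mem_insert_self _ _))

theorem insert_erase_mem_powersetCard_erase {U S : Finset α} {a x : α} (hS : S ∈ U.powersetCard m) (haS : a ∈ S) (hxU : x ∈ U) (hxS : x ∉ S) :
    insert x (S.erase a) ∈ (U.erase a).powersetCard m := by
  rw [mem_powersetCard] at hS ⊢
  have hxa : x ≠ a := fun h => hxS (h ▸ haS)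
  refine ⟨insert_subset (mem_erase.2 ⟨hxa, hxU⟩) (erase_subset_erase a hS.1), ?_⟩
  rw [card_insert_of_notMem fun h => hxS (mem_of_mem_erase h), card_erase_of_mem haS, hS.2]
  have : 0 < #S := card_pos.2 ⟨a, haS⟩
  omega

theorem card_le_choose_of_forall_subset_block {U : Finset α} {a : α} {𝒜 : Finset (Finset α)}
    (ha : a ∈ U) (h𝒜 : 𝒜 ⊆ U.powersetCard m) (hHU : ∀ i, H i ⊂ U)
    (hH : ∀ i j, i ≠ j → #(H i ∩ H j) + 2 < m) (hblock : ∀ S ∈ 𝒜, ∃ i, S ⊆ H i) :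
    #𝒜 ≤ (#U - 1).choose m := by
  have hout : ∀ S ∈ 𝒜, a ∈ S → ∃ x ∈ U, ∃ i, S ⊆ H i ∧ x ∉ H i := fun S hS _ => by
    obtain ⟨i, hSi⟩ := hblock S hS
    obtain ⟨x, hxU, hxi⟩ := exists_of_ssubset (hHU i)
    exact ⟨x, hxU, i, hSi, hxi⟩
  have : Nonempty α := ⟨a⟩
  choose! p hpU hp using hout
  rw [← card_erase_of_mem ha, ← card_powersetCard]
  refine card_le_card_of_injOn (fun S => if a ∈ S then insert (p S) (S.erase a) else S) ?_ ?_
  · intro S hS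
    have hSU := h𝒜 hS
    by_cases haS : a ∈ S
    · obtain ⟨i, hSi, hpi⟩ := hp S hS haS
      simpa only [if_pos haS, mem_coe] using insert_erase_mem_powersetCard_erase hSU haS (hpU S hS haS)
        fun h => hpi (hSi h)
    · rw [mem_powersetCard] at hSU
      simpa only [if_neg haS, mem_coe, mem_powersetCard, subset_erase] using
        ⟨⟨hSU.1, haS⟩, hSU.2⟩
  · intro S hS T hT heq
    have hSm := (mem_powersetCard.1 (h𝒜 hS)).2
    have hTm := (mem_powersetCard.1 (h𝒜 hT)).2
    by_cases haS : a ∈ S <;> by_cases haT : a ∈ T <;>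
      simp only [if_pos, if_neg, haS, haT, not_false_eq_true] at heq
    · obtain ⟨i, hSi, hpi⟩ := hp S hS haS
      obtain ⟨j, hTj, hpj⟩ := hp T hT haT
      exact eq_of_insert_erase_eq hH hSm haS haT hSi hTj hpi hpj heq
    · obtain ⟨i, hSi, hpi⟩ := hp S hS haS
      obtain ⟨k, hTk⟩ := hblock T hT
      exact absurd heq (insert_erase_ne_of_subset hH hSm haS hSi hpi hTk)
    · obtain ⟨j, hTj, hpj⟩ := hp T hT haT
      obtain ⟨k, hSk⟩ := hblock S hS
      exact absurd heq.symm (insert_erase_ne_of_subset hH hTm haT hTj hpj hSk)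
    · exact heq

end

theorem stmt_0 (n r d m : ℕ) (hd : 2 ≤ d) (hm1 : d + 1 ≤ m) (hm2 : m ≤ n - 1)
    (H : Fin r → Finset ℕ) (hprop : ∀ j, H j ⊂ Finset.range n)
    (hpair : ∀ j1 j2 : Fin r, j1 ≠ j2 →
      H j1 ≠ H j2 ∧ (H j1 ∩ H j2).card ≤ d - 2) :
    (((Finset.range n).powersetCard m).filter
        (fun S => ∃ j : Fin r, S ⊆ H j)).card ≤ (n - 1).choose m := by
  have hmem : 0 ∈ range n := mem_range.2 (by omega)
  have hinter : ∀ i j, i ≠ j → #(H i ∩ H j) + 2 < m := fun i j hij => by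
    have := (hpair i j hij).2
    omega
  simpa only [card_range] using card_le_choose_of_forall_subset_block hmem (filter_subset _ _)
    hprop hinter fun S hS => (mem_filter.1 hS).2
end

section
/- Let n, r, d, m be natural numbers with 2 ≤ d and d+1 ≤ m ≤ n. Suppose H_1, …, H_r are proper subsets of {1,…,n} that are pairwise distinct with pairwise intersections of size at most d−2. Let A_{m−1} be the number of (m−1)-element subsets of {1,…,n} contained in some H_j and A_m the number of m-element subsets contained in some H_j. Then A_{m−1} ≤ C(n, m) − A_m. -/
open Finset

/-!
Fix for every `H j` a point `g j` of `U` outside it. Sending a `k`-set `S ⊆ H j` to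
`insert (g j) S` is injective and lands in the `(k+1)`-sets covered by no `H i`, because
two distinct members of the family share fewer than `k - 1` points: a `k`-set inside
`H i ∩ H j`, or two `k`-sets in different members with `k - 1` common points, cannot exist.
-/

theorem Finset.card_le_card_inter_add_one_of_subset_insert {α : Type*} [DecidableEq α]
    {s t : Finset α} {a : α} (h : s ⊆ insert a t) : #s ≤ #(s ∩ t) + 1 := by
  have hs : s ⊆ insert a (s ∩ t) := fun x hx => by
    rcases mem_insert.mp (h hx) with rfl | hxt
    · exact mem_insert_self _ _
    · exact mem_insert_of_mem (mem_inter.mpr ⟨hx, hxt⟩)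
  exact (card_le_card hs).trans (card_insert_le _ _)

theorem Finset.card_covered_le_card_uncovered_succ {α ι : Type*} [DecidableEq α]
    {U : Finset α} {H : ι → Finset α} [∀ S : Finset α, Decidable (∃ j, S ⊆ H j)] (hH : ∀ j, H j ⊂ U) {k : ℕ}
    (hinter : ∀ i j, i ≠ j → #(H i ∩ H j) + 1 < k) :
    #((U.powersetCard k).filter (fun S => ∃ j, S ⊆ H j)) ≤
      #((U.powersetCard (k + 1)).filter (fun S => ¬ ∃ j, S ⊆ H j)) := by
  cases isEmpty_or_nonempty ι
  · simp
  choose g hgU hgH using fun j => exists_of_ssubset (hH j)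
  choose! c hc using fun S (hS : S ∈ (U.powersetCard k).filter (fun S => ∃ j, S ⊆ H j)) =>
    (mem_filter.mp hS).2
  have hgS : ∀ S ∈ (U.powersetCard k).filter (fun S => ∃ j, S ⊆ H j), g (c S) ∉ S :=
    fun S hS hg => hgH _ (hc S hS hg)
  have hsmall : ∀ i j, i ≠ j → ∀ S ⊆ H i ∩ H j, #S + 1 < k := fun i j hij S hS =>
    (Nat.add_le_add_right (card_le_card hS) 1).trans_lt (hinter i j hij)
  refine card_le_card_of_injOn (fun S => insert (g (c S)) S) (fun S hS => ?_)
    (fun S hS T hT hST => ?_)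
  · have hS' := mem_filter.mp hS
    obtain ⟨hSU, hSk⟩ := mem_powersetCard.mp hS'.1
    refine mem_filter.mpr ⟨mem_powersetCard.mpr ⟨insert_subset (hgU _) hSU, ?_⟩, ?_⟩
    · rw [card_insert_of_notMem (hgS S hS), hSk]
    · rintro ⟨j, hj⟩
      obtain rfl | hcj := eq_or_ne (c S) j
      · exact hgH _ (hj (mem_insert_self _ _))
      · have := hsmall _ _ hcj S (subset_inter (hc S hS) ((subset_insert _ _).trans hj))
        omega
  · simp only at hST
    obtain hcST | hcST := eq_or_ne (c S) (c T)
    · calc S = (insert (g (c S)) S).erase (g (c S)) := (erase_insert (hgS S hS)).symm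
        _ = (insert (g (c T)) T).erase (g (c T)) := by rw [hST, hcST]
        _ = T := erase_insert (hgS T hT)
    · have hST' : S ⊆ insert (g (c T)) T := hST ▸ subset_insert _ _
      have hlow := card_le_card_inter_add_one_of_subset_insert hST'
      have hhigh := hsmall _ _ hcST (S ∩ T) (inter_subset_inter (hc S hS) (hc T hT))
      have hSk := (mem_powersetCard.mp (mem_filter.mp hS).1).2
      omega

theorem stmt_2_general (n r d m : ℕ) (hd : 2 ≤ d) (hm1 : d + 1 ≤ m)
    (H : Fin r → Finset ℕ) (hprop : ∀ j, H j ⊂ Finset.range n)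
    (hpair : ∀ j1 j2 : Fin r, j1 ≠ j2 →
      H j1 ≠ H j2 ∧ (H j1 ∩ H j2).card ≤ d - 2) :
    (((Finset.range n).powersetCard (m - 1)).filter
        (fun S => ∃ j : Fin r, S ⊆ H j)).card ≤
    n.choose m -
      (((Finset.range n).powersetCard m).filter
        (fun S => ∃ j : Fin r, S ⊆ H j)).card := by
  have hinter : ∀ i j, i ≠ j → #(H i ∩ H j) + 1 < m - 1 := fun i j hij => by
    have := (hpair i j hij).2
    omega
  have huncovered : #(((range n).powersetCard m).filter (fun S => ¬ ∃ j, S ⊆ H j)) =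
      n.choose m - #(((range n).powersetCard m).filter (fun S => ∃ j, S ⊆ H j)) := by
    rw [filter_not, card_sdiff_of_subset (filter_subset _ _), card_powersetCard, card_range]
  rw [← huncovered, ← Nat.sub_add_cancel (show 1 ≤ m by omega)]
  exact card_covered_le_card_uncovered_succ hprop hinter

theorem stmt_2 (n r d m : ℕ) (hd : 2 ≤ d) (hm1 : d + 1 ≤ m) (hm2 : m ≤ n)
    (H : Fin r → Finset ℕ) (hprop : ∀ j, H j ⊂ Finset.range n)
    (hpair : ∀ j1 j2 : Fin r, j1 ≠ j2 →
      H j1 ≠ H j2 ∧ (H j1 ∩ H j2).card ≤ d - 2) :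
    (((Finset.range n).powersetCard (m - 1)).filter
        (fun S => ∃ j : Fin r, S ⊆ H j)).card ≤
    n.choose m -
      (((Finset.range n).powersetCard m).filter
        (fun S => ∃ j : Fin r, S ⊆ H j)).card :=
  stmt_2_general n r d m hd hm1 H hprop hpair
end

section
/- Let V be a finite set, v ∈ V, N ⊆ V \ {v} with |N| = k ≥ 1, and let 𝒞 be a family of proper subsets of N. For a uniformly random linear ordering π of V, let B = {u ∈ N : u precedes v}. Suppose that for each i with d+1 ≤ i ≤ k−1, the number of i-element subsets of N contained in some member of 𝒞 is at most C(k−1, i), and no k-element subset (i.e. N itself) is contained in a member of 𝒞. Then P(|B| ≥ d+1 and B is not contained in any member of 𝒞) ≥ Σ_{i=d+1}^{k} (1/(k+1))·(i/k) = 1/2 − (1/2)·d(d+1)/(k(k+1)). -/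
/-!
For a uniformly random ordering `π`, the set `B` of elements of `N` placed before `v` satisfies
`P(B = S) = 1 / ((k + 1) * C(k, |S|))` for every `S ⊆ N`. Its size is uniform on `{0, …, k}`:
in each ordering exactly one element of `insert v N` has exactly `i` predecessors in
`insert v N`, and the transposition swapping two elements shows that each of them is equally
likely to be that one. Given its size, `B` is uniform by the symmetry under permutations of `N`.
At most `C(k - 1, i)` of the `C(k, i)` subsets of size `i` lie in a member of `𝒞`, so at least
`C(k - 1, i - 1) = (i / k) * C(k, i)` do not, whence `P(|B| = i, B uncovered) ≥ i / (k (k + 1))`;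
summing over `d + 1 ≤ i ≤ k` gives the bound.
-/

open Finset Equiv

section
variable {V β : Type*} [LinearOrder β]

def below (π : V ≃ β) (s : Finset V) (w : V) : Finset V := {u ∈ s | π u < π w}

@[simp]
lemma mem_below {π : V ≃ β} {s : Finset V} {w u : V} : u ∈ below π s w ↔ u ∈ s ∧ π u < π w :=
  mem_filter

lemma below_subset (π : V ≃ β) (s : Finset V) (w : V) : below π s w ⊆ s := filter_subset _ _

lemma below_insert_self [DecidableEq V] (π : V ≃ β) (s : Finset V) (w : V) :
    below π (insert w s) w = below π s w := by
  simp [below, filter_insert]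

lemma map_below_trans {s : Finset V} (g : Perm V) (hs : ∀ x, g x ∈ s ↔ x ∈ s) (π : V ≃ β)
    (w : V) : (below (g.trans π) s w).map g.toEmbedding = below π s (g w) := by
  ext u
  simp only [mem_map_equiv, mem_below, Equiv.trans_apply, apply_symm_apply]
  rw [← hs (g.symm u), apply_symm_apply]

lemma card_below_lt_card_below {π : V ≃ β} {s : Finset V} {w w' : V} (hw : w ∈ s)
    (h : π w < π w') : #(below π s w) < #(below π s w') := by
  refine card_lt_card ((ssubset_iff_of_subset fun u hu => ?_).2 ⟨w, ?_, ?_⟩)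
  · simp only [mem_below] at hu ⊢
    exact ⟨hu.1, hu.2.trans h⟩
  · simp [hw, h]
  · simp

lemma injOn_card_below (π : V ≃ β) (s : Finset V) : Set.InjOn (fun w => #(below π s w)) s := by
  intro w hw w' hw' h
  rcases lt_trichotomy (π w) (π w') with hlt | heq | hgt
  · exact absurd h (card_below_lt_card_below hw hlt).ne
  · exact π.injective heq
  · exact absurd h (card_below_lt_card_below hw' hgt).ne'

lemma image_card_below [DecidableEq V] (π : V ≃ β) (s : Finset V) :
    s.image (fun w => #(below π s w)) = range #s := by
  refine eq_of_subset_of_card_le (fun i hi => ?_) ?_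
  · obtain ⟨w, hw, rfl⟩ := mem_image.1 hi
    refine mem_range.2 (card_lt_card ((ssubset_iff_of_subset (below_subset π s w)).2 ⟨w, hw, ?_⟩))
    simp
  · rw [card_range, card_image_of_injOn (injOn_card_below π s)]

lemma card_filter_card_below_eq_one [DecidableEq V] (π : V ≃ β) {s : Finset V} {i : ℕ}
    (hi : i < #s) : #{w ∈ s | #(below π s w) = i} = 1 := by
  obtain ⟨w, hw, rfl⟩ := mem_image.1 ((image_card_below π s).symm ▸ mem_range.2 hi)
  refine card_eq_one.2 ⟨w, eq_singleton_iff_unique_mem.2 ⟨mem_filter.2 ⟨hw, rfl⟩, ?_⟩⟩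
  intro w' hw'
  exact injOn_card_below π s (mem_filter.1 hw').1 hw (mem_filter.1 hw').2

end

lemma choose_pred_le_card_filter_not {α : Type*} {N : Finset α} {i : ℕ} (hN : N.Nonempty)
    (hi : 0 < i) (p : Finset α → Prop) [DecidablePred p]
    (h : #{S ∈ N.powersetCard i | p S} ≤ (#N - 1).choose i) :
    (#N - 1).choose (i - 1) ≤ #{S ∈ N.powersetCard i | ¬ p S} := by
  obtain ⟨k, hk⟩ : ∃ k, #N = k + 1 := ⟨#N - 1, by have := hN.card_pos; omega⟩
  obtain ⟨j, rfl⟩ : ∃ j, i = j + 1 := ⟨i - 1, by omega⟩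
  have hsplit : #{S ∈ N.powersetCard (j + 1) | p S} + #{S ∈ N.powersetCard (j + 1) | ¬ p S} =
      #(N.powersetCard (j + 1)) := card_filter_add_card_filter_not p
  rw [card_powersetCard, hk, Nat.choose_succ_succ'] at hsplit
  rw [hk] at h ⊢
  simp only [Nat.add_sub_cancel] at h ⊢
  omega

lemma sum_Icc_mul_two_add {d k : ℕ} (h : d ≤ k) :
    (∑ i ∈ Icc (d + 1) k, i) * 2 + d * (d + 1) = k * (k + 1) := by
  induction k, h using Nat.le_induction with
  | base => simp
  | succ k hdk ih =>
    rw [sum_Icc_succ_top (by omega), add_mul, add_right_comm, ih]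
    ring

section
variable {V β : Type*} [Fintype V] [DecidableEq V] [Fintype β] [LinearOrder β]

lemma card_filter_perm_trans (g : Perm V) (p : (V ≃ β) → Prop) [DecidablePred p] :
    #{π | p (g.trans π)} = #{π | p π} :=
  card_equiv (g.symm.equivCongr (Equiv.refl β)) fun _ => by simp [Equiv.equivCongr]

lemma exists_perm_map_eq {s T T' : Finset V} (hT : T ⊆ s) (hT' : T' ⊆ s) (h : #T = #T') :
    ∃ g : Perm V, (∀ x, g x ∈ s ↔ x ∈ s) ∧ (∀ x ∉ s, g x = x) ∧ T.map g.toEmbedding = T' := by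
  have card_sub {U : Finset V} (hU : U ⊆ s) : Fintype.card {x : s // x.1 ∈ U} = #U := by
    rw [Fintype.card_congr (subtypeSubtypeEquivSubtype fun hx => hU hx), Fintype.card_coe]
  let e := Fintype.equivOfCardEq ((card_sub hT).trans (h.trans (card_sub hT').symm))
  refine ⟨Perm.ofSubtype e.extendSubtype, Perm.ofSubtype_apply_mem_iff_mem _,
    fun x hx => Perm.ofSubtype_apply_of_not_mem _ hx, ?_⟩
  refine eq_of_subset_of_card_le (fun y hy => ?_) (by rw [card_map, h])
  obtain ⟨x, hx, rfl⟩ := mem_map.1 hy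
  simp only [Equiv.coe_toEmbedding, Perm.ofSubtype_apply_of_mem _ (hT hx)]
  exact e.extendSubtype_mem ⟨x, hT hx⟩ hx

lemma card_filter_below_eq_congr {s T T' : Finset V} {w : V} (hw : w ∉ s) (hT : T ⊆ s)
    (hT' : T' ⊆ s) (h : #T = #T') :
    #{π : V ≃ β | below π s w = T} = #{π : V ≃ β | below π s w = T'} := by
  obtain ⟨g, hgs, hgfix, hgT⟩ := exists_perm_map_eq hT' hT h.symm
  conv_rhs => rw [← card_filter_perm_trans g]
  congr 1
  refine filter_congr fun π _ => ?_
  rw [← map_inj (f := g.toEmbedding) (s₁ := below (g.trans π) s w), map_below_trans g hgs,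
    hgfix w hw, hgT]

lemma card_filter_card_below_congr {s : Finset V} {w w' : V} (hw : w ∈ s) (hw' : w' ∈ s)
    (i : ℕ) : #{π : V ≃ β | #(below π s w) = i} = #{π : V ≃ β | #(below π s w') = i} := by
  have hs : ∀ x, swap w w' x ∈ s ↔ x ∈ s := fun x => by
    rcases eq_or_ne x w with rfl | hxw
    · simp [hw, hw']
    rcases eq_or_ne x w' with rfl | hxw'
    · simp [hw, hw']
    · rw [swap_apply_of_ne_of_ne hxw hxw']
  conv_rhs => rw [← card_filter_perm_trans (swap w w')]
  congr 1
  refine filter_congr fun π _ => ?_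
  rw [← card_map (swap w w').toEmbedding (s := below ((swap w w').trans π) s w'),
    map_below_trans _ hs, swap_apply_right]

lemma card_mul_card_filter_card_below {s : Finset V} {w : V} {i : ℕ} (hw : w ∈ s) (hi : i < #s) :
    #s * #{π : V ≃ β | #(below π s w) = i} = Fintype.card (V ≃ β) := by
  calc #s * #{π : V ≃ β | #(below π s w) = i}
      = ∑ w' ∈ s, #{π : V ≃ β | #(below π s w') = i} := by
        rw [sum_const_nat fun w' hw' => card_filter_card_below_congr hw' hw i]
    _ = ∑ π : V ≃ β, #{w' ∈ s | #(below π s w') = i} :=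
        sum_card_bipartiteAbove_eq_sum_card_bipartiteBelow (fun w' π => #(below π s w') = i)
    _ = Fintype.card (V ≃ β) := by
        simp [card_filter_card_below_eq_one _ hi]

lemma card_filter_card_below_eq {s S : Finset V} {w : V} (hw : w ∉ s) (hS : S ⊆ s) :
    #{π : V ≃ β | #(below π s w) = #S} = (#s).choose #S * #{π : V ≃ β | below π s w = S} := by
  rw [card_eq_sum_card_fiberwise (f := fun π => below π s w) (t := s.powersetCard #S)
    fun π hπ => mem_powersetCard.2 ⟨below_subset π s w, (mem_filter.1 hπ).2⟩,
    ← card_powersetCard]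
  refine sum_const_nat fun T hT => ?_
  obtain ⟨hTs, hTcard⟩ := mem_powersetCard.1 hT
  rw [filter_filter, ← card_filter_below_eq_congr hw hTs hS hTcard]
  congr 1
  exact filter_congr fun π _ => ⟨And.right, fun h => ⟨(congrArg card h).trans hTcard, h⟩⟩

lemma card_mul_choose_mul_card_filter_below {s S : Finset V} {w : V} (hw : w ∉ s) (hS : S ⊆ s) :
    (#s + 1) * (#s).choose #S * #{π : V ≃ β | below π s w = S} = Fintype.card (V ≃ β) := by
  have hlt : #S < #(insert w s) := by
    rw [card_insert_of_notMem hw]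
    exact Nat.lt_succ_of_le (card_le_card hS)
  rw [mul_assoc, ← card_filter_card_below_eq hw hS, ← card_insert_of_notMem hw,
    ← card_mul_card_filter_card_below (mem_insert_self w s) hlt]
  simp only [below_insert_self]

lemma card_mul_choose_mul_card_filter_below_mem {s : Finset V} {w : V} {i : ℕ}
    {𝒢 : Finset (Finset V)} (hw : w ∉ s) (h𝒢 : 𝒢 ⊆ s.powersetCard i) :
    (#s + 1) * (#s).choose i * #{π : V ≃ β | below π s w ∈ 𝒢} = #𝒢 * Fintype.card (V ≃ β) := by
  rw [card_eq_sum_card_fiberwise (f := fun π => below π s w) (t := 𝒢)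
    (s := {π : V ≃ β | below π s w ∈ 𝒢}) fun π hπ => (mem_filter.1 hπ).2, mul_sum]
  refine sum_const_nat fun S hS => ?_
  obtain ⟨hSs, rfl⟩ := mem_powersetCard.1 (h𝒢 hS)
  rw [filter_filter, ← card_mul_choose_mul_card_filter_below hw hSs]
  congr 2
  exact filter_congr fun π _ => ⟨And.right, fun h => ⟨h ▸ hS, h⟩⟩

lemma mul_card_le_card_filter_below_mem {s : Finset V} {w : V} {i : ℕ} {𝒢 : Finset (Finset V)}
    (hw : w ∉ s) (hi : 0 < i) (his : i ≤ #s) (h𝒢 : 𝒢 ⊆ s.powersetCard i)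
    (hcard : (#s - 1).choose (i - 1) ≤ #𝒢) :
    i * Fintype.card (V ≃ β) ≤ #s * (#s + 1) * #{π : V ≃ β | below π s w ∈ 𝒢} := by
  have hprob := card_mul_choose_mul_card_filter_below_mem (β := β) hw h𝒢
  have hratio : #s * (#s - 1).choose (i - 1) = (#s).choose i * i := by
    obtain ⟨k, hk⟩ : ∃ k, #s = k + 1 := ⟨#s - 1, by omega⟩
    obtain ⟨j, rfl⟩ : ∃ j, i = j + 1 := ⟨i - 1, by omega⟩
    rw [hk]
    exact Nat.add_one_mul_choose_eq k j
  refine Nat.le_of_mul_le_mul_left ?_ (Nat.choose_pos his)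
  calc (#s).choose i * (i * Fintype.card (V ≃ β))
      = #s * (#s - 1).choose (i - 1) * Fintype.card (V ≃ β) := by rw [hratio]; ring
    _ ≤ #s * #𝒢 * Fintype.card (V ≃ β) := by gcongr
    _ = (#s).choose i * (#s * (#s + 1) * #{π : V ≃ β | below π s w ∈ 𝒢}) := by
        rw [mul_assoc, ← hprob]; ring

lemma card_filter_below_eq_sum_Icc (s : Finset V) (w : V) (d : ℕ) (p : Finset V → Prop)
    [DecidablePred p] :
    #{π : V ≃ β | d + 1 ≤ #(below π s w) ∧ p (below π s w)} =
      ∑ i ∈ Icc (d + 1) #s, #{π : V ≃ β | below π s w ∈ {S ∈ s.powersetCard i | p S}} := by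
  rw [card_eq_sum_card_fiberwise (f := fun π => #(below π s w)) (t := Icc (d + 1) #s)
    fun π hπ => mem_Icc.2 ⟨(mem_filter.1 hπ).2.1, card_le_card (below_subset π s w)⟩]
  refine sum_congr rfl fun i hi => ?_
  rw [filter_filter]
  refine congrArg card (filter_congr fun π _ => ?_)
  simp only [mem_filter, mem_powersetCard]
  constructor
  · rintro ⟨⟨-, hp⟩, rfl⟩
    exact ⟨⟨below_subset π s w, rfl⟩, hp⟩
  · rintro ⟨⟨-, rfl⟩, hp⟩
    exact ⟨⟨(mem_Icc.1 hi).1, hp⟩, rfl⟩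

end

lemma half_sub_le_div_of_sum_Icc_mul_le {d k x m : ℕ} (hdk : d + 1 ≤ k) (hm : 0 < m)
    (h : (∑ i ∈ Icc (d + 1) k, i) * m ≤ k * (k + 1) * x) :
    (x : ℚ) / m ≥ 1 / 2 - 1 / 2 * ((d : ℚ) * (d + 1)) / (k * (k + 1)) := by
  have hgauss := sum_Icc_mul_two_add (by omega : d ≤ k)
  generalize ∑ i ∈ Icc (d + 1) k, i = σ at h hgauss
  have hσ : (k : ℚ) * (k + 1) - d * (d + 1) = σ * 2 := by
    rw [sub_eq_iff_eq_add]
    exact_mod_cast hgauss.symm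
  have hσx : (σ : ℚ) * m ≤ k * (k + 1) * x := by exact_mod_cast h
  have hk : (0 : ℚ) < k := by exact_mod_cast (by omega : 0 < k)
  rw [ge_iff_le, le_div_iff₀ (by positivity),
    show (1 / 2 - 1 / 2 * ((d : ℚ) * (d + 1)) / (k * (k + 1))) =
      (k * (k + 1) - d * (d + 1)) / (2 * (k * (k + 1))) by field_simp,
    div_mul_eq_mul_div, div_le_iff₀ (by positivity), hσ]
  linarith

theorem stmt_10_general {V : Type*} [Fintype V] [DecidableEq V] (v : V) (d k : ℕ)
    (hdk : d + 1 ≤ k) (N : Finset V) (hvN : v ∉ N) (hN : N.card = k)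
    (𝒞 : Finset (Finset V))
    (hcount : ∀ i, d + 1 ≤ i → i ≤ k - 1 →
      ((N.powersetCard i).filter (fun S => ∃ C ∈ 𝒞, S ⊆ C)).card ≤ (k - 1).choose i)
    (htop : ¬ ∃ C ∈ 𝒞, N ⊆ C) :
    (((Finset.univ : Finset (V ≃ Fin (Fintype.card V))).filter
        (fun π => d + 1 ≤ (N.filter (fun u => π u < π v)).card ∧
          ¬ ∃ C ∈ 𝒞, N.filter (fun u => π u < π v) ⊆ C)).card : ℚ) /
      ((Fintype.card V).factorial : ℚ) ≥
    1 / 2 - (1 / 2) * ((d : ℚ) * ((d : ℚ) + 1)) / ((k : ℚ) * ((k : ℚ) + 1)) := by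
  subst hN
  have hterm (i : ℕ) (hi : i ∈ Icc (d + 1) #N) : i * (Fintype.card V).factorial ≤
      #N * (#N + 1) * #{π : V ≃ Fin (Fintype.card V) |
        below π N v ∈ {S ∈ N.powersetCard i | ¬ ∃ C ∈ 𝒞, S ⊆ C}} := by
    obtain ⟨hdi, hiN⟩ := mem_Icc.1 hi
    have hcovered : #{S ∈ N.powersetCard i | ∃ C ∈ 𝒞, S ⊆ C} ≤ (#N - 1).choose i := by
      rcases hiN.lt_or_eq with hlt | rfl
      · exact hcount i hdi (by omega)
      · simp [powersetCard_self, filter_singleton, htop]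
    rw [← Fintype.card_equiv (Fintype.equivFin V)]
    exact mul_card_le_card_filter_below_mem hvN (by omega) hiN (filter_subset _ _)
      (choose_pred_le_card_filter_not (card_pos.1 (by omega)) (by omega) _ hcovered)
  refine half_sub_le_div_of_sum_Icc_mul_le hdk (Nat.factorial_pos _) ?_
  rw [sum_mul]
  refine (sum_le_sum hterm).trans_eq ?_
  rw [← mul_sum, ← card_filter_below_eq_sum_Icc]
  rfl

theorem stmt_10 {V : Type*} [Fintype V] [DecidableEq V] (v : V) (d k : ℕ)
    (hdk : d + 1 ≤ k) (N : Finset V) (hvN : v ∉ N) (hN : N.card = k)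
    (𝒞 : Finset (Finset V)) (h𝒞 : ∀ C ∈ 𝒞, C ⊂ N)
    (hcount : ∀ i, d + 1 ≤ i → i ≤ k - 1 →
      ((N.powersetCard i).filter (fun S => ∃ C ∈ 𝒞, S ⊆ C)).card ≤ (k - 1).choose i)
    (htop : ¬ ∃ C ∈ 𝒞, N ⊆ C) :
    (((Finset.univ : Finset (V ≃ Fin (Fintype.card V))).filter
        (fun π => d + 1 ≤ (N.filter (fun u => π u < π v)).card ∧
          ¬ ∃ C ∈ 𝒞, N.filter (fun u => π u < π v) ⊆ C)).card : ℚ) /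
      ((Fintype.card V).factorial : ℚ) ≥
    1 / 2 - (1 / 2) * ((d : ℚ) * ((d : ℚ) + 1)) / ((k : ℚ) * ((k : ℚ) + 1)) :=
  stmt_10_general v d k hdk N hvN hN 𝒞 hcount htop
end

section
/- Let d ≥ 2 and set D = d(d+1). Let a_1, …, a_s be positive integers with a_i ≤ D for each i and Σ_i a_i = 2m, where m ≤ D/2 = C(d+1,2). Then Σ_{i=1}^{s} D/(2·(D − a_i + 1)) ≤ D/2, as rational numbers, with equality when s = 2m = D and all a_i = 1. -/
theorem stmt_13 (d : ℕ) (hd : 2 ≤ d) (s m : ℕ) (a : Fin s → ℕ)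
    (ha1 : ∀ i, 1 ≤ a i) (ha2 : ∀ i, a i ≤ d * (d + 1))
    (hsum : ∑ i, a i = 2 * m) (hm : 2 * m ≤ d * (d + 1)) :
    (∑ i, ((d * (d + 1) : ℕ) : ℚ) / (2 * (((d * (d + 1) : ℕ) : ℚ) - (a i : ℚ) + 1)) ≤
        ((d * (d + 1) : ℕ) : ℚ) / 2) ∧
    (s = d * (d + 1) → 2 * m = d * (d + 1) → (∀ i, a i = 1) →
      ∑ i, ((d * (d + 1) : ℕ) : ℚ) / (2 * (((d * (d + 1) : ℕ) : ℚ) - (a i : ℚ) + 1)) =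
        ((d * (d + 1) : ℕ) : ℚ) / 2) := by
  set D : ℕ := d * (d + 1) with hD
  have hD6 : 6 ≤ D := by rw [hD]; nlinarith
  have hDQ : (6 : ℚ) ≤ (D : ℚ) := by exact_mod_cast hD6
  constructor
  · have key : ∀ i, ((D : ℕ) : ℚ) / (2 * (((D : ℕ) : ℚ) - (a i : ℚ) + 1)) ≤ (a i : ℚ) / 2 := by
      intro i
      have h1 : (1 : ℚ) ≤ (a i : ℚ) := by exact_mod_cast ha1 i
      have h2 : (a i : ℚ) ≤ (D : ℚ) := by exact_mod_cast ha2 i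
      have hpos : (0 : ℚ) < 2 * (((D : ℕ) : ℚ) - (a i : ℚ) + 1) := by linarith
      rw [div_le_div_iff₀ hpos (by norm_num)]
      nlinarith [mul_nonneg (sub_nonneg.2 h1) (sub_nonneg.2 h2)]
    calc ∑ i, ((D : ℕ) : ℚ) / (2 * (((D : ℕ) : ℚ) - (a i : ℚ) + 1))
        ≤ ∑ i, (a i : ℚ) / 2 := Finset.sum_le_sum fun i _ => key i
      _ = (m : ℚ) := by
          rw [← Finset.sum_div]
          have : (∑ i, (a i : ℚ)) = ((2 * m : ℕ) : ℚ) := by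
            rw [← hsum]; push_cast; ring
          rw [this]; push_cast; ring
      _ ≤ (D : ℚ) / 2 := by
          have : ((2 * m : ℕ) : ℚ) ≤ (D : ℚ) := by exact_mod_cast hm
          push_cast at this; linarith
  · intro hs hm2 hall
    have : ∀ i : Fin s, ((D : ℕ) : ℚ) / (2 * (((D : ℕ) : ℚ) - (a i : ℚ) + 1)) = 1 / 2 := by
      intro i
      rw [hall i]
      push_cast
      rw [div_eq_div_iff (by linarith) (by norm_num)]
      ring
    rw [Finset.sum_congr rfl fun i _ => this i, Finset.sum_const]
    simp only [Finset.card_univ, Fintype.card_fin, hs]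
    rw [nsmul_eq_mul]
    ring
end

section
/- Let G be a finite simple graph that is k-connected (k ≥ 1), is not a complete graph on k+1 vertices, and let v be a vertex of G whose neighborhood induces a clique. Then G − v is k-connected. -/
/-!
Any walk in `G` between two vertices other than a simplicial vertex `v` can be rerouted around
`v`: where it passes `u - v - w`, the neighbours `u` and `w` of `v` are equal or adjacent. Hence
deleting `v` from a connected induced subgraph `G - S` keeps it connected, so `G - v` inherits
the separation property for sets of fewer than `k` vertices. The vertex bound holds because
a `k`-connected graph on `k + 1` vertices is complete.
-/

/-- A finite simple graph is `k`-connected if it has more than `k` vertices and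
deleting any set of fewer than `k` vertices leaves a connected graph. -/
def KConnected {V : Type*} [Fintype V] [DecidableEq V] (G : SimpleGraph V) (k : ℕ) : Prop :=
  k + 1 ≤ Fintype.card V ∧
    ∀ S : Finset V, S.card < k → (G.induce ((Sᶜ : Finset V) : Set V)).Connected

namespace SimpleGraph

variable {V : Type*} {G : SimpleGraph V} {v : V}

noncomputable def induceInduceIso (G : SimpleGraph V) (s : Set V) (t : Set s) :
    (G.induce s).induce t ≃g G.induce (Subtype.val '' t) where
  toEquiv := Equiv.Set.image Subtype.val t Subtype.val_injective
  map_rel_iff' := Iff.rfl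

lemma IsClique.induce_neighborSet (hv : G.IsClique (G.neighborSet v)) (s : Set V) (hvs : v ∈ s) :
    (G.induce s).IsClique ((G.induce s).neighborSet ⟨v, hvs⟩) :=
  fun _ ha _ hb hab => hv ha hb (Subtype.coe_injective.ne hab)

/-- The start `x` may be a neighbour of the walk's first vertex `z`; this is what lets the
induction step over `z = v`. -/
lemma Walk.reachable_induce_compl_singleton_of_isClique (hv : G.IsClique (G.neighborSet v))
    {z y : V} (p : G.Walk z y) (hy : y ≠ v) {x : V} (hx : x ≠ v) (hxz : x = z ∨ G.Adj x z) :
    (G.induce {v}ᶜ).Reachable ⟨x, hx⟩ ⟨y, hy⟩ := by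
  induction p generalizing x with
  | nil =>
    rcases hxz with rfl | hadj
    · rfl
    · exact Adj.reachable (induce_adj.mpr hadj)
  | @cons z w _ hzw q ih =>
    by_cases hz : z = v
    · subst hz
      have hzx : G.Adj z x := (hxz.resolve_left hx).symm
      refine ih hy hx ?_
      by_cases hxw : x = w
      · exact Or.inl hxw
      · exact Or.inr (hv hzx hzw hxw)
    · have hreach : (G.induce {v}ᶜ).Reachable ⟨x, hx⟩ ⟨z, hz⟩ := by
        rcases hxz with rfl | hadj
        · rfl
        · exact Adj.reachable (induce_adj.mpr hadj)
      exact hreach.trans (ih hy hz (Or.inr hzw))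

theorem Preconnected.induce_compl_singleton_of_isClique (hG : G.Preconnected)
    (hv : G.IsClique (G.neighborSet v)) : (G.induce {v}ᶜ).Preconnected := by
  rintro ⟨x, hx⟩ ⟨y, hy⟩
  obtain ⟨p⟩ := hG x y
  exact p.reachable_induce_compl_singleton_of_isClique hv hy hx (Or.inl rfl)

theorem Preconnected.induce_diff_singleton_of_isClique {s : Set V}
    (hs : (G.induce s).Preconnected) (hv : G.IsClique (G.neighborSet v)) :
    (G.induce (s \ {v})).Preconnected := by
  by_cases hvs : v ∈ s
  · have h := hs.induce_compl_singleton_of_isClique (hv.induce_neighborSet s hvs)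
    rwa [(induceInduceIso G s _).preconnected_iff, Set.image_val_compl, Set.image_singleton] at h
  · rwa [Set.sdiff_singleton_eq_self hvs]

lemma adj_of_connected_induce_pair {x y : V} (hxy : x ≠ y)
    (h : (G.induce {x, y}).Connected) : G.Adj x y := by
  by_contra hadj
  have hbot : G.induce {x, y} = ⊥ := by
    ext ⟨a, ha⟩ ⟨b, hb⟩
    simp only [Set.mem_insert_iff, Set.mem_singleton_iff] at ha hb
    rcases ha with rfl | rfl <;> rcases hb with rfl | rfl <;> simp [hadj, mt G.adj_symm hadj]
  have := reachable_bot.mp (hbot ▸ h.preconnected ⟨x, by simp⟩ ⟨y, by simp⟩)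
  exact hxy (congrArg Subtype.val this)

end SimpleGraph

open SimpleGraph

lemma KConnected.eq_top_of_card_eq {V : Type*} [Fintype V] [DecidableEq V] {G : SimpleGraph V}
    {k : ℕ} (hG : KConnected G k) (hcard : Fintype.card V = k + 1) : G = ⊤ := by
  ext x y
  refine ⟨Adj.ne, fun hxy => adj_of_connected_induce_pair hxy ?_⟩
  have hpair : ({x, y} : Finset V).card = 2 := Finset.card_pair hxy
  have hle := hpair ▸ Finset.card_le_univ {x, y}
  have h := hG.2 {x, y}ᶜ (by rw [Finset.card_compl, hpair]; omega)
  rwa [compl_compl, Finset.coe_pair] at h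

theorem stmt_16_general {V : Type*} [Fintype V] [DecidableEq V] (G : SimpleGraph V) (k : ℕ)
    (hconn : KConnected G k)
    (hnotcomplete : ¬ (Fintype.card V = k + 1 ∧ G = ⊤))
    (v : V) (hv : G.IsClique (G.neighborSet v)) :
    KConnected (G.induce ((({v}ᶜ : Finset V) : Set V))) k := by
  have hcard : k + 2 ≤ Fintype.card V :=
    hconn.1.lt_of_ne fun h => hnotcomplete ⟨h.symm, hconn.eq_top_of_card_eq h.symm⟩
  have hcard' : Fintype.card (({v}ᶜ : Finset V) : Set V) = Fintype.card V - 1 := by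
    simp only [Finset.coe_sort_coe, Fintype.card_coe, Finset.card_compl, Finset.card_singleton]
  refine ⟨by omega, fun S hS => ?_⟩
  set S' : Finset V := S.map (Function.Embedding.subtype _)
  have hS' : (G.induce (S'ᶜ : Finset V)).Connected := hconn.2 S' (by simpa [S'] using hS)
  have hSc : (Sᶜ : Finset _).Nonempty := by
    rw [← Finset.card_pos, Finset.card_compl, hcard']; omega
  rw [connected_iff]
  refine ⟨?_, hSc.coe_sort⟩
  have hset : Subtype.val '' ((Sᶜ : Finset _) : Set (({v}ᶜ : Finset V) : Set V)) =
      ((S'ᶜ : Finset V) : Set V) \ {v} := by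
    ext x
    simp only [S', Finset.coe_map, Finset.coe_compl, Set.mem_sdiff, Set.mem_compl_iff]
    aesop
  rw [(induceInduceIso G _ _).preconnected_iff, hset]
  exact hS'.preconnected.induce_diff_singleton_of_isClique hv

theorem stmt_16 {V : Type*} [Fintype V] [DecidableEq V] (G : SimpleGraph V) (k : ℕ)
    (hk : 1 ≤ k) (hconn : KConnected G k)
    (hnotcomplete : ¬ (Fintype.card V = k + 1 ∧ G = ⊤))
    (v : V) (hv : G.IsClique (G.neighborSet v)) :
    KConnected (G.induce ((({v}ᶜ : Finset V) : Set V))) k :=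
  stmt_16_general G k hconn hnotcomplete v hv
end

section
/- Let n, r, d, i, k be natural numbers with 2 ≤ d, d+1 ≤ i ≤ k−1, and let N be a k-element set. Suppose H_1, …, H_r are proper subsets of N, pairwise distinct, with |H_{j1} ∩ H_{j2}| ≤ d−2 for j1 ≠ j2. If S is a uniformly random i-element subset of N, then P(S ⊆ H_j for some j) ≤ (k − i)/k; equivalently, the number of i-subsets of N contained in some H_j is at most C(k−1, i) = C(k,i)·(k−i)/k. -/
/-! Call a set covered if it lies in some `H j`. Distinct `H j` meet in at most `d - 2` points,
so two covered sets meeting in at least `d - 1` points lie in a common `H j`; hence for `m ≥ d`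
an uncovered `(m + 1)`-set contains at most one covered `m`-set. Double counting the pairs
`S ⊂ T` of a covered `m`-subset and an `(m + 1)`-subset of `N` gives, for the number `c m` of
covered `m`-subsets, `(k - m) * c m ≤ m * c (m + 1) + C(k, m + 1)`. The numbers `C(k - 1, m)`
satisfy this with equality, and `c k = 0 = C(k - 1, k)` because every `H j` is proper, so
downward induction gives `c m ≤ C(k - 1, m)`. -/

open Finset

theorem Nat.mul_choose_succ_add_choose_succ {n m : ℕ} (hm : m ≤ n) :
    m * n.choose (m + 1) + (n + 1).choose (m + 1) = (n + 1 - m) * n.choose m := by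
  have hsucc := Nat.choose_succ_right_eq n m
  rw [Nat.choose_succ_succ, Nat.sub_add_comm hm]
  linear_combination hsucc

theorem Nat.cast_choose_pred_div_cast_choose (K : Type*) [Field K] [CharZero K] {k i : ℕ}
    (hik : i < k) : ((k - 1).choose i : K) / k.choose i = (k - i) / k := by
  obtain ⟨n, rfl⟩ : ∃ n, k = n + 1 := ⟨k - 1, by omega⟩
  have hchoose : (n.choose i * (n + 1) : K) = (n + 1).choose i * (n + 1 - i : ℕ) := by
    exact_mod_cast Nat.choose_mul_succ_eq n i
  have hpos : ((n + 1).choose i : K) ≠ 0 := by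
    exact_mod_cast (Nat.choose_pos hik.le).ne'
  rw [Nat.add_sub_cancel, Nat.cast_succ, div_eq_div_iff hpos (Nat.cast_add_one_ne_zero n)]
  push_cast [Nat.cast_sub hik.le] at hchoose ⊢
  linear_combination hchoose

namespace Finset

variable {α : Type*} [DecidableEq α]

theorem sub_card_le_card_bipartiteAbove_powersetCard_succ {N S : Finset α} (hS : S ⊆ N) :
    #N - #S ≤ #((N.powersetCard (#S + 1)).bipartiteAbove (· ⊆ ·) S) := by
  rw [← card_sdiff_of_subset hS]
  refine card_le_card_of_injOn (insert · S) (fun x hx => ?_) (fun x hx y hy hxy => ?_)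
  · rw [mem_coe, mem_sdiff] at hx
    simp [mem_powersetCard, insert_subset hx.1 hS, card_insert_of_notMem hx.2,
      subset_insert]
  · rw [mem_coe, mem_sdiff] at hx hy
    have : x ∈ insert y S := (congrArg (x ∈ ·) hxy).mp (mem_insert_self x S)
    exact (mem_insert.mp this).resolve_right hx.2

theorem card_bipartiteBelow_le_succ {A : Finset (Finset α)} {T : Finset α} {m : ℕ}
    (hA : ∀ S ∈ A, #S = m) (hT : #T = m + 1) :
    #(A.bipartiteBelow (· ⊆ ·) T) ≤ m + 1 := by
  calc #(A.bipartiteBelow (· ⊆ ·) T) ≤ #(T.powersetCard m) := by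
        refine card_le_card fun S hS => ?_
        rw [mem_bipartiteBelow] at hS
        exact mem_powersetCard.mpr ⟨hS.2, hA S hS.1⟩
    _ = m + 1 := by rw [card_powersetCard, hT, Nat.choose_succ_self_right]

def UnionClosedOnOverlap (t : ℕ) (P : Finset α → Prop) : Prop :=
  ∀ S S', P S → P S' → t ≤ #(S ∩ S') → P (S ∪ S')

section UnionClosedOnOverlap

variable {P : Finset α → Prop} {t m : ℕ}

theorem card_bipartiteBelow_le_one_of_unionClosedOnOverlap
    (hglue : UnionClosedOnOverlap t P) (htm : t < m)
    {A : Finset (Finset α)} (hA : ∀ S ∈ A, #S = m ∧ P S) {T : Finset α} (hT : #T = m + 1)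
    (hPT : ¬ P T) : #(A.bipartiteBelow (· ⊆ ·) T) ≤ 1 := by
  refine card_le_one.mpr fun S hS S' hS' => ?_
  rw [mem_bipartiteBelow] at hS hS'
  obtain ⟨hSm, hPS⟩ := hA S hS.1
  obtain ⟨hS'm, hPS'⟩ := hA S' hS'.1
  have hunion : #(S ∪ S') ≤ m + 1 := hT ▸ card_le_card (union_subset hS.2 hS'.2)
  have hinter := card_union_add_card_inter S S'
  -- two `m`-subsets of the `(m + 1)`-set `T` share at least `m - 1 ≥ t` points
  have hPunion : P (S ∪ S') := hglue S S' hPS hPS' (by omega)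
  by_contra hne
  have hlt : #S < #(S ∪ S') := by
    refine card_lt_card (ssubset_of_subset_of_ne subset_union_left fun h => hne ?_)
    exact eq_of_subset_of_card_le (h ▸ subset_union_right) (by omega) |>.symm
  exact hPT (eq_of_subset_of_card_le (union_subset hS.2 hS'.2) (by omega) ▸ hPunion)

variable [DecidablePred P]

theorem card_sub_mul_card_filter_powersetCard_le
    (hglue : UnionClosedOnOverlap t P) (htm : t < m) (N : Finset α) :
    (#N - m) * #((N.powersetCard m).filter P) ≤
      m * #((N.powersetCard (m + 1)).filter P) + (#N).choose (m + 1) := by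
  set A := (N.powersetCard m).filter P
  set U := N.powersetCard (m + 1)
  have hA : ∀ S ∈ A, #S = m ∧ P S := fun S hS => by
    rw [mem_filter, mem_powersetCard] at hS
    exact ⟨hS.1.2, hS.2⟩
  have hsplit := card_filter_add_card_filter_not (s := U) P
  calc (#N - m) * #A = ∑ _S ∈ A, (#N - m) := by rw [sum_const, smul_eq_mul, mul_comm]
    _ ≤ ∑ S ∈ A, #(U.bipartiteAbove (· ⊆ ·) S) := sum_le_sum fun S hS => by
        have hS' := hS
        rw [mem_filter, mem_powersetCard] at hS'
        simpa only [hS'.1.2] using sub_card_le_card_bipartiteAbove_powersetCard_succ hS'.1.1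
    _ = ∑ T ∈ U, #(A.bipartiteBelow (· ⊆ ·) T) :=
        sum_card_bipartiteAbove_eq_sum_card_bipartiteBelow _
    _ ≤ ∑ T ∈ U, if P T then m + 1 else 1 := sum_le_sum fun T hT => by
        have hTm := (mem_powersetCard.mp hT).2
        split_ifs with hPT
        · exact card_bipartiteBelow_le_succ (fun S hS => (hA S hS).1) hTm
        · exact card_bipartiteBelow_le_one_of_unionClosedOnOverlap hglue htm hA hTm hPT
    _ = m * #(U.filter P) + #U := by
        rw [sum_ite, sum_const, sum_const, smul_eq_mul, smul_eq_mul]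
        linarith
    _ = m * #(U.filter P) + (#N).choose (m + 1) := by rw [card_powersetCard]

theorem card_filter_powersetCard_le_choose_pred
    (hglue : UnionClosedOnOverlap t P) {N : Finset α} (hPN : ¬ P N)
    (htm : t < m) (hmN : m ≤ #N) : #((N.powersetCard m).filter P) ≤ (#N - 1).choose m := by
  induction hmN using Nat.decreasingInduction with
  | self => simp [powersetCard_self, filter_singleton, hPN]
  | of_succ m hm ih =>
    obtain ⟨n, hn⟩ : ∃ n, #N = n + 1 := ⟨#N - 1, by omega⟩
    rw [hn, Nat.add_sub_cancel] at ih ⊢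
    have hstep := card_sub_mul_card_filter_powersetCard_le hglue htm N
    have hsucc := Nat.mul_le_mul_left m (ih (by omega))
    rw [hn] at hstep
    refine Nat.le_of_mul_le_mul_left (c := n + 1 - m) ?_ (by omega)
    rw [← Nat.mul_choose_succ_add_choose_succ (by omega)]
    omega

end UnionClosedOnOverlap

end Finset

theorem stmt_18 {α : Type*} [DecidableEq α] (d i k r : ℕ) (hd : 2 ≤ d)
    (hi : d + 1 ≤ i) (hik : i ≤ k - 1) (N : Finset α) (hN : N.card = k)
    (H : Fin r → Finset α) (hprop : ∀ j, H j ⊂ N)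
    (hpair : ∀ j1 j2 : Fin r, j1 ≠ j2 →
      H j1 ≠ H j2 ∧ (H j1 ∩ H j2).card ≤ d - 2) :
    (((N.powersetCard i).filter (fun S => ∃ j : Fin r, S ⊆ H j)).card ≤
        (k - 1).choose i) ∧
    ((((N.powersetCard i).filter (fun S => ∃ j : Fin r, S ⊆ H j)).card : ℚ) /
        (k.choose i : ℚ) ≤ ((k : ℚ) - (i : ℚ)) / (k : ℚ)) := by
  have hglue : UnionClosedOnOverlap (d - 1) fun S => ∃ j, S ⊆ H j := by
    rintro S S' ⟨j, hj⟩ ⟨j', hj'⟩ hcard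
    obtain rfl : j = j' := by
      by_contra hne
      have := card_le_card (inter_subset_inter hj hj')
      have := (hpair j j' hne).2
      omega
    exact ⟨j, union_subset hj hj'⟩
  have hPN : ¬ ∃ j, N ⊆ H j := fun ⟨j, hj⟩ => (hprop j).2 hj
  have hcount := card_filter_powersetCard_le_choose_pred hglue hPN (m := i) (by omega) (by omega)
  rw [hN] at hcount
  refine ⟨hcount, ?_⟩
  calc _ ≤ ((k - 1).choose i : ℚ) / k.choose i := by gcongr
    _ = _ := Nat.cast_choose_pred_div_cast_choose ℚ (by omega)
end
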